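/- arXiv:math/0603505 — 3 statements merged into one kernel-verified Lean document; each statement's English description precedes it below -/
import Mathlib

section
/- In the group algebra ℚ[D_p] of the dihedral group D_p of order 2p (p an odd prime), the element ζ + ζ^{-1} (where ζ is the rotation of order p) is central, and the subalgebra ℚ[ζ + ζ^{-1}] is isomorphic to ℚ × ℚ(ζ_p + ζ_p^{-1}), where ζ_p is a primitive p-th root of unity over ℚ. -/
set_option maxHeartbeats 1000000
set_option synthInstance.maxHeartbeats 400000

open MonoidAlgebra Polynomial

section Chi

/-- The character `j ↦ z ^ j.val` on `ZMod p`. -/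
noncomputable def dihedralChi (p : ℕ) (z : ℂ) (j : ZMod p) : ℂ := z ^ j.val

variable {p : ℕ} {z : ℂ}

lemma dihedralChi_zero [NeZero p] : dihedralChi p z 0 = 1 := by
  simp [dihedralChi]

lemma dihedralChi_add [NeZero p] (hz : IsPrimitiveRoot z p) (i j : ZMod p) :
    dihedralChi p z (i + j) = dihedralChi p z i * dihedralChi p z j := by
  unfold dihedralChi
  rw [ZMod.val_add, ← pow_add]
  conv_rhs => rw [← Nat.div_add_mod (ZMod.val i + ZMod.val j) p]
  rw [pow_add, pow_mul, hz.pow_eq_one, one_pow, one_mul]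

lemma dihedralChi_neg_mul [NeZero p] (hz : IsPrimitiveRoot z p) (i : ZMod p) :
    dihedralChi p z (-i) * dihedralChi p z i = 1 := by
  rw [← dihedralChi_add hz, neg_add_cancel, dihedralChi_zero]

end Chi

section Rho

/-- The two-dimensional representation of the dihedral group. -/
noncomputable def dihedralRho (p : ℕ) (z : ℂ) : DihedralGroup p → Matrix (Fin 2) (Fin 2) ℂ
  | .r i => !![dihedralChi p z i, 0; 0, dihedralChi p z (-i)]
  | .sr i => !![0, dihedralChi p z (-i); dihedralChi p z i, 0]

variable {p : ℕ} {z : ℂ}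

/-- `dihedralRho` as a monoid hom. -/
noncomputable def dihedralRhoHom [NeZero p] (z : ℂ) (hz : IsPrimitiveRoot z p) :
    DihedralGroup p →* Matrix (Fin 2) (Fin 2) ℂ where
  toFun := dihedralRho p z
  map_one' := by
    rw [DihedralGroup.one_def]
    show !![dihedralChi p z 0, 0; 0, dihedralChi p z (-0)] = 1
    rw [neg_zero, dihedralChi_zero, Matrix.one_fin_two]
  map_mul' := by
    rintro (i | i) (j | j) <;>
      simp only [DihedralGroup.r_mul_r, DihedralGroup.r_mul_sr,
        DihedralGroup.sr_mul_r, DihedralGroup.sr_mul_sr] <;>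
      show _ = _ * _ <;>
      simp only [dihedralRho, Matrix.mul_fin_two, mul_zero, zero_mul, add_zero, zero_add,
        sub_eq_add_neg, neg_add_rev, neg_neg, dihedralChi_add hz] <;>
      ring_nf

end Rho

/-- In the rational group algebra of the dihedral group of order `2p` (`p` an
odd prime), the element `ζ + ζ⁻¹` (with `ζ` the rotation of order `p`) is
central, and the subalgebra it generates is isomorphic to
`ℚ × ℚ(ζ_p + ζ_p⁻¹)`, where `ζ_p` is a primitive `p`-th root of unity. -/
theorem dihedral_group_algebra_center {p : ℕ} (hp : p.Prime) (hodd : Odd p)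
    (z : ℂ) (hz : IsPrimitiveRoot z p) :
    (MonoidAlgebra.of ℚ (DihedralGroup p) (DihedralGroup.r 1) +
        MonoidAlgebra.of ℚ (DihedralGroup p) (DihedralGroup.r (-1)) ∈
      Subalgebra.center ℚ (MonoidAlgebra ℚ (DihedralGroup p))) ∧
    Nonempty
      ((Algebra.adjoin ℚ
          ({MonoidAlgebra.of ℚ (DihedralGroup p) (DihedralGroup.r 1) +
            MonoidAlgebra.of ℚ (DihedralGroup p) (DihedralGroup.r (-1))} :
            Set (MonoidAlgebra ℚ (DihedralGroup p)))) ≃ₐ[ℚ]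
        (ℚ × Algebra.adjoin ℚ ({z + z⁻¹} : Set ℂ))) := by
  haveI : Fact p.Prime := ⟨hp⟩
  haveI : NeZero p := ⟨hp.ne_zero⟩
  have hp2 : p ≠ 2 := by rintro rfl; exact (Nat.not_odd_iff_even.mpr ⟨1, rfl⟩) hodd
  have hp1 : 1 < p := hp.one_lt
  haveI : Fact (1 < p) := ⟨hp1⟩
  set α : MonoidAlgebra ℚ (DihedralGroup p) :=
      MonoidAlgebra.of ℚ (DihedralGroup p) (DihedralGroup.r 1) +
      MonoidAlgebra.of ℚ (DihedralGroup p) (DihedralGroup.r (-1)) with hα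
  constructor
  · -- centrality
    rw [Subalgebra.mem_center_iff]
    intro b
    induction b using MonoidAlgebra.induction_on with
    | of g =>
      rw [hα]
      cases g with
      | r j =>
        rw [mul_add, add_mul, ← map_mul, ← map_mul, ← map_mul, ← map_mul,
          DihedralGroup.r_mul_r, DihedralGroup.r_mul_r, DihedralGroup.r_mul_r,
          DihedralGroup.r_mul_r, add_comm j 1, add_comm j (-1)]
      | sr j =>
        rw [mul_add, add_mul, ← map_mul, ← map_mul, ← map_mul, ← map_mul,
          DihedralGroup.sr_mul_r, DihedralGroup.sr_mul_r, DihedralGroup.r_mul_sr,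
          DihedralGroup.r_mul_sr, sub_eq_add_neg, sub_eq_add_neg, neg_neg, add_comm]
    | add f g hf hg => rw [add_mul, hf, hg, mul_add]
    | smul r f hf => rw [smul_mul_assoc, mul_smul_comm, hf]
  · -- the isomorphism
    have hzp : z ^ p = 1 := hz.pow_eq_one
    have hz0 : z ≠ 0 := by
      intro h; rw [h, zero_pow hp.ne_zero] at hzp; exact zero_ne_one hzp
    have hzinv : z ^ (p - 1) = z⁻¹ := by
      have h1 : z * z ^ (p - 1) = 1 := by
        rw [← pow_succ', Nat.sub_add_cancel hp.pos]; exact hzp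
      exact eq_inv_of_mul_eq_one_left (by rw [mul_comm]; exact h1)
    set w : ℂ := z + z⁻¹ with hw
    have hwint : IsIntegral ℚ w := by
      have hz_int : IsIntegral ℚ z := (hz.isIntegral hp.pos).tower_top
      have hzi_int : IsIntegral ℚ z⁻¹ := by rw [← hzinv]; exact hz_int.pow _
      exact hz_int.add hzi_int
    set Ψ : ℚ[X] := minpoly ℚ w with hΨ
    have hΨne : Ψ ≠ 0 := minpoly.ne_zero hwint
    have hΨw : aeval w Ψ = 0 := minpoly.aeval ℚ w
    have hΨ2 : Ψ.eval 2 ≠ 0 := by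
      intro h0
      obtain ⟨c, hc⟩ := (dvd_iff_isRoot.mpr h0 : (X - C (2:ℚ)) ∣ Ψ)
      have hc0 : c ≠ 0 := by rintro rfl; rw [mul_zero] at hc; exact hΨne hc
      have hmul : (w - 2) * aeval w c = 0 := by
        have h2 := hΨw
        rw [hc, map_mul] at h2
        simpa using h2
      rcases mul_eq_zero.mp hmul with h | h
      · have hw2 : w = 2 := sub_eq_zero.mp h
        have hzq : (z - 1) ^ 2 = 0 := by
          have hzw : z * w = z * 2 := by rw [hw2]
          rw [hw, mul_add, mul_inv_cancel₀ hz0] at hzw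
          ring_nf
          ring_nf at hzw
          linear_combination hzw
        exact hz.ne_one hp1 (sub_eq_zero.mp (pow_eq_zero_iff two_ne_zero |>.mp hzq))
      · have hdeg := minpoly.degree_le_of_ne_zero ℚ w hc0 h
        have hXne : (X - C (2:ℚ)) ≠ 0 := X_sub_C_ne_zero 2
        have hnd : Ψ.natDegree = 1 + c.natDegree := by
          rw [hc, natDegree_mul hXne hc0, natDegree_X_sub_C]
        have hle := natDegree_le_natDegree hdeg
        rw [hnd] at hle
        omega
    set m : ℚ[X] := (X - C (2:ℚ)) * Ψ with hm
    have hXirr : Irreducible (X - C (2:ℚ)) := irreducible_X_sub_C 2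
    have hcop : IsCoprime (X - C (2:ℚ)) Ψ :=
      hXirr.coprime_iff_not_dvd.mpr fun hd => hΨ2 (dvd_iff_isRoot.mp hd)
    have hm2 : m.eval 2 = 0 := by simp [hm]
    have hmw : aeval w m = 0 := by rw [hm, map_mul, hΨw, mul_zero]
    -- the subfield ℚ(ζ_p + ζ_p⁻¹)
    set K := Algebra.adjoin ℚ ({z + z⁻¹} : Set ℂ) with hK
    have hwK : w ∈ K := Algebra.subset_adjoin rfl
    set w₀ : K := ⟨w, hwK⟩ with hw₀
    have hcoe : ∀ f : ℚ[X], (aeval w₀ f : ℂ) = aeval w f := fun f => by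
      rw [aeval_subalgebra_coe]
    have hw₀iff : ∀ f : ℚ[X], aeval w₀ f = 0 ↔ aeval w f = 0 := by
      intro f
      constructor
      · intro h; rw [← hcoe, h, ZeroMemClass.coe_zero]
      · intro h; exact Subtype.ext (by rw [hcoe, h, ZeroMemClass.coe_zero])
    set x : ℚ × K := ((2:ℚ), w₀) with hx
    have haux : ∀ f : ℚ[X], aeval x f = (f.eval 2, aeval w₀ f) := by
      intro f
      have h1 := aeval_algHom_apply (AlgHom.fst ℚ ℚ K) x f
      have h2 := aeval_algHom_apply (AlgHom.snd ℚ ℚ K) x f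
      refine Prod.ext ?_ ?_
      · show (aeval x f).1 = f.eval 2
        have h1' : (aeval x f).1 = aeval (2:ℚ) f := h1.symm
        rw [h1']; simp [coe_aeval_eq_eval]
      · exact h2.symm
    -- the augmentation character
    set ε : MonoidAlgebra ℚ (DihedralGroup p) →ₐ[ℚ] ℚ :=
      (MonoidAlgebra.lift ℚ ℚ (DihedralGroup p)) 1 with hε
    have hεα : ε α = 2 := by
      rw [hα, map_add, hε, MonoidAlgebra.lift_of, MonoidAlgebra.lift_of]
      norm_num
    -- the two-dimensional representation
    set Φ : MonoidAlgebra ℚ (DihedralGroup p) →ₐ[ℚ] Matrix (Fin 2) (Fin 2) ℂ :=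
      (MonoidAlgebra.lift ℚ (Matrix (Fin 2) (Fin 2) ℂ) (DihedralGroup p))
        (dihedralRhoHom z hz) with hΦ
    have hχ1 : dihedralChi p z 1 = z := by
      unfold dihedralChi; rw [ZMod.val_one]; exact pow_one z
    have hχn : dihedralChi p z (-1) = z⁻¹ := by
      have h1 := dihedralChi_neg_mul hz 1
      rw [hχ1] at h1
      exact eq_inv_of_mul_eq_one_left h1
    have hΦα : Φ α = algebraMap ℂ (Matrix (Fin 2) (Fin 2) ℂ) w := by
      rw [hα, hΦ, map_add, MonoidAlgebra.lift_of, MonoidAlgebra.lift_of]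
      show dihedralRho p z (.r 1) + dihedralRho p z (.r (-1)) = _
      show !![dihedralChi p z 1, 0; 0, dihedralChi p z (-1)] +
        !![dihedralChi p z (-1), 0; 0, dihedralChi p z (-(-1))] = _
      rw [neg_neg, hχ1, hχn]
      ext i j
      fin_cases i <;> fin_cases j <;>
        simp [Matrix.algebraMap_matrix_apply, hw] <;> ring
    -- the rotation generator
    have hRp : (MonoidAlgebra.of ℚ (DihedralGroup p) (DihedralGroup.r 1)) ^ p = 1 := by
      rw [← map_pow, DihedralGroup.r_one_pow, ZMod.natCast_self, ← DihedralGroup.one_def,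
        map_one]
    have hr1 : ((p - 1 : ℕ) : ZMod p) = -1 := by
      rw [Nat.cast_sub hp.pos]
      simp
    have hαR : α = aeval (MonoidAlgebra.of ℚ (DihedralGroup p) (DihedralGroup.r 1))
        (X + X ^ (p - 1) : ℚ[X]) := by
      rw [hα, map_add, aeval_X, aeval_X_pow, ← map_pow, DihedralGroup.r_one_pow, hr1]
    -- divisibility
    have hcop2 : IsCoprime (X - C (1:ℚ)) (cyclotomic p ℚ) := by
      have hpirr := cyclotomic.irreducible_rat (n := p) hp.pos
      refine (hpirr.coprime_iff_not_dvd.mpr ?_).symm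
      intro hdvd
      have h1 : (X - C (1:ℚ)) ≠ 0 := X_sub_C_ne_zero 1
      have h2 := natDegree_le_of_dvd hdvd h1
      rw [natDegree_X_sub_C, natDegree_cyclotomic, Nat.totient_prime hp] at h2
      have := hp.two_le
      omega
    have hdvd : (X ^ p - 1 : ℚ[X]) ∣ m.comp (X + X ^ (p - 1)) := by
      have hc1 : (X - C (1:ℚ)) ∣ m.comp (X + X ^ (p - 1)) := by
        rw [dvd_iff_isRoot]
        show eval 1 (m.comp (X + X ^ (p - 1))) = 0
        rw [eval_comp]
        have he : eval 1 (X + X ^ (p - 1) : ℚ[X]) = 2 := by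
          simp only [eval_add, eval_X, eval_pow, one_pow]
          norm_num
        rw [he]
        exact hm2
      have hc2 : cyclotomic p ℚ ∣ m.comp (X + X ^ (p - 1)) := by
        rw [cyclotomic_eq_minpoly_rat hz hp.pos]
        apply minpoly.dvd
        rw [aeval_comp]
        have hzt : aeval z (X + X ^ (p - 1) : ℚ[X]) = w := by
          rw [map_add, aeval_X, aeval_X_pow, hzinv, hw]
        rw [hzt, hmw]
      have h3 := hcop2.mul_dvd hc1 hc2
      rwa [C_1, mul_comm, cyclotomic_prime_mul_X_sub_one] at h3
    have hmα : aeval α m = 0 := by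
      obtain ⟨c, hc⟩ := hdvd
      rw [hαR, ← aeval_comp, hc, map_mul]
      have h4 : aeval (MonoidAlgebra.of ℚ (DihedralGroup p) (DihedralGroup.r 1))
          (X ^ p - 1 : ℚ[X]) = 0 := by
        rw [map_sub, aeval_X_pow, map_one, hRp, sub_self]
      rw [h4, zero_mul]
    -- kernels
    have hker : RingHom.ker (aeval α : ℚ[X] →ₐ[ℚ] MonoidAlgebra ℚ (DihedralGroup p)) =
        Ideal.span {m} := by
      ext f
      rw [RingHom.mem_ker, Ideal.mem_span_singleton]
      constructor
      · intro hf
        have h2 : f.eval 2 = 0 := by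
          have h5 := aeval_algHom_apply ε α f
          rw [hf, map_zero, hεα] at h5
          have := h5.symm
          rwa [show (aeval (2:ℚ)) f = f.eval 2 by simp [coe_aeval_eq_eval]] at this
        have hwf : aeval w f = 0 := by
          have h3 := aeval_algHom_apply Φ α f
          rw [hf, map_zero, hΦα, aeval_algebraMap_apply] at h3
          simpa [Matrix.algebraMap_matrix_apply] using
            congrArg (fun M : Matrix (Fin 2) (Fin 2) ℂ => M 0 0) h3
        exact hcop.mul_dvd (dvd_iff_isRoot.mpr h2) (minpoly.dvd ℚ w hwf)
      · rintro ⟨c, rfl⟩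
        rw [map_mul, hmα, zero_mul]
    have hkerψ : RingHom.ker (aeval x : ℚ[X] →ₐ[ℚ] (ℚ × K)) = Ideal.span {m} := by
      ext f
      rw [RingHom.mem_ker, Ideal.mem_span_singleton, haux f, Prod.mk_eq_zero]
      constructor
      · rintro ⟨h2, hwf⟩
        exact hcop.mul_dvd (dvd_iff_isRoot.mpr h2) (minpoly.dvd ℚ w ((hw₀iff f).mp hwf))
      · rintro ⟨c, rfl⟩
        constructor
        · rw [eval_mul, hm2, zero_mul]
        · rw [map_mul, (hw₀iff m).mpr hmw, zero_mul]
    have hsurj : Function.Surjective (aeval x : ℚ[X] →ₐ[ℚ] (ℚ × K)) := by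
      have h10 : aeval x (C (Ψ.eval 2)⁻¹ * Ψ) = (1, 0) := by
        rw [haux]
        refine Prod.ext ?_ ?_
        · rw [eval_mul, eval_C, inv_mul_cancel₀ hΨ2]
        · rw [map_mul, (hw₀iff Ψ).mpr hΨw, mul_zero]
      rintro ⟨a, b⟩
      have hbmem : (b : ℂ) ∈ Algebra.adjoin ℚ ({z + z⁻¹} : Set ℂ) := b.2
      rw [Algebra.adjoin_singleton_eq_range_aeval] at hbmem
      obtain ⟨g, hg⟩ := hbmem
      have hgb : aeval w₀ g = b := Subtype.ext (by rw [hcoe]; exact hg)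
      refine ⟨g + C (a - g.eval 2) * (C (Ψ.eval 2)⁻¹ * Ψ), ?_⟩
      rw [map_add, map_mul, aeval_C, h10, haux g, hgb]
      refine Prod.ext ?_ ?_
      · simp
      · simp
    -- assembling the isomorphism
    have hrr : RingHom.ker ((aeval α : ℚ[X] →ₐ[ℚ] MonoidAlgebra ℚ (DihedralGroup p)).rangeRestrict)
        = Ideal.span {m} := by
      rw [← hker]
      ext f
      simp only [RingHom.mem_ker]
      rw [← Subtype.coe_inj]
      simp [AlgHom.rangeRestrict]
    let e1 : (ℚ[X] ⧸ Ideal.span {m}) ≃ₐ[ℚ]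
        (aeval α : ℚ[X] →ₐ[ℚ] MonoidAlgebra ℚ (DihedralGroup p)).range :=
      (Ideal.quotientEquivAlgOfEq ℚ hrr.symm).trans
        (Ideal.quotientKerAlgEquivOfSurjective (AlgHom.rangeRestrict_surjective _))
    let e2 : (ℚ[X] ⧸ Ideal.span {m}) ≃ₐ[ℚ] (ℚ × K) :=
      (Ideal.quotientEquivAlgOfEq ℚ hkerψ.symm).trans
        (Ideal.quotientKerAlgEquivOfSurjective hsurj)
    exact ⟨(Subalgebra.equivOfEq _ _ (Algebra.adjoin_singleton_eq_range_aeval ℚ α)).trans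
      (e1.symm.trans e2)⟩
end

section
/- Let X be a hyperelliptic curve v^2 = f(u) with deg f = 2g+1, and let (a, b) with deg a > g represent a semi-reduced divisor (b^2 ≡ f mod a). One step of Cantor reduction replaces a by a' = (f − b^2)/a and b by −b mod a', and deg a' = max(2g+1 − deg a, deg a − 2) when the relevant leading terms do not cancel; consequently, starting from deg a ≤ 2g, the reduction loop terminates with deg a ≤ g after at most ⌈g/2⌉ iterations. -/
open Polynomial

/-- Cantor reduction: for a hyperelliptic curve `v² = f(u)` with `f` monic of
degree `2g+1` and a semi-reduced representative `(a, b)` (so `a ∣ f - b²`,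
`deg b < deg a`) with `g < deg a ≤ 2g`, one reduction step replaces `a` by
`a' = (f - b²)/a`, and when the relevant leading terms do not cancel
(`deg b = deg a - 1` and `deg (f - b²) = max (2g+1) (2 deg b)`), we get
`deg a' = max (2g+1 - deg a) (deg a - 2)`.  Consequently any sequence of
degrees starting at most `2g` and decreasing according to this rule reaches
degree at most `g` within `⌈g/2⌉` iterations. -/
theorem cantor_reduction_step {k : Type*} [Field k]
    (hchar : ringChar k ≠ 2) (g : ℕ)
    (f a b : k[X]) (hf : f.Monic) (hfdeg : f.natDegree = 2 * g + 1)
    (ha0 : a ≠ 0) (hdvd : a ∣ f - b ^ 2)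
    (hba : b.natDegree < a.natDegree)
    (hlow : g < a.natDegree) (hhigh : a.natDegree ≤ 2 * g)
    (hnocancel₁ : b.natDegree = a.natDegree - 1)
    (hnocancel₂ : (f - b ^ 2).natDegree = max (2 * g + 1) (2 * b.natDegree)) :
    ((f - b ^ 2) / a).natDegree =
        max (2 * g + 1 - a.natDegree) (a.natDegree - 2) ∧
      ∀ d : ℕ → ℕ, d 0 ≤ 2 * g →
        (∀ i, g < d i → d (i + 1) ≤ max (2 * g + 1 - d i) (d i - 2)) →
        ∃ i ≤ (g + 1) / 2, d i ≤ g := by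
  obtain ⟨q, hq⟩ := hdvd
  have hfb : f - b ^ 2 ≠ 0 := by
    intro h
    rw [h] at hnocancel₂
    simp at hnocancel₂
    omega
  have hq0 : q ≠ 0 := by rintro rfl; simp at hq; exact hfb hq
  have hdeg : (f - b ^ 2).natDegree = a.natDegree + q.natDegree := by
    rw [hq, Polynomial.natDegree_mul ha0 hq0]
  constructor
  · rw [hq, mul_div_cancel_left₀ _ ha0]
    omega
  · intro d h0 hstep
    by_contra h
    push_neg at h
    have key : ∀ i, i ≤ (g + 1) / 2 → d i + 2 * i ≤ 2 * g := by
      intro i hi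
      induction i with
      | zero => simpa using h0
      | succ n ih =>
        have hn : n ≤ (g + 1) / 2 := by omega
        have h1 := h n hn
        have h2 := h (n + 1) hi
        have h3 := hstep n h1
        have h4 := ih hn
        omega
    have := key ((g + 1) / 2) le_rfl
    have := h ((g + 1) / 2) le_rfl
    omega
end

section
/- Let τ = ζ_5 + ζ_5^{-1} where ζ_5 is a primitive 5th root of unity over a field k of characteristic ≠ 5 containing τ, and let f(u) = u^5 − 5u^3 + 5u + t. Then E(u1, u2) = u2^2 + u1^2 − τ·u1·u2 + τ^2 − 4 divides f(u2) − f(u1) in k[u1, u2]. -/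
open MvPolynomial

/-- Let `τ = ζ₅ + ζ₅⁻¹` for a primitive 5th root of unity `ζ₅` in a field `k`
of characteristic `≠ 5`, and `f(u) = u⁵ - 5u³ + 5u + t`.  Then
`E = u₂² + u₁² - τ u₁ u₂ + τ² - 4` divides `f(u₂) - f(u₁)` in `k[u₁, u₂]`. -/
theorem ttv_correspondence_div {k : Type*} [Field k]
    (hchar : ringChar k ≠ 5) (ζ : k) (hζ : IsPrimitiveRoot ζ 5) (t : k) :
    ((X 1) ^ 2 + (X 0) ^ 2 - C (ζ + ζ⁻¹) * (X 0) * (X 1)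
        + C ((ζ + ζ⁻¹) ^ 2 - 4) : MvPolynomial (Fin 2) k) ∣
      ((X 1) ^ 5 - 5 * (X 1) ^ 3 + 5 * (X 1) + C t)
        - ((X 0) ^ 5 - 5 * (X 0) ^ 3 + 5 * (X 0) + C t) := by
  have hζ0 : ζ ≠ 0 := hζ.ne_zero (by norm_num)
  have h5 : ζ ^ 5 = 1 := hζ.pow_eq_one
  have hζ1 : ζ ≠ 1 := hζ.ne_one (by norm_num)
  have hs : ζ ^ 4 + ζ ^ 3 + ζ ^ 2 + ζ + 1 = 0 := by
    have h : (ζ - 1) * (ζ ^ 4 + ζ ^ 3 + ζ ^ 2 + ζ + 1) = 0 := by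
      linear_combination h5
    rcases mul_eq_zero.mp h with h | h
    · exact absurd (sub_eq_zero.mp h) hζ1
    · exact h
  have hinv : ζ⁻¹ = ζ ^ 4 :=
    inv_eq_of_mul_eq_one_right (by linear_combination h5)
  have hτ : (ζ + ζ⁻¹) ^ 2 + (ζ + ζ⁻¹) - 1 = 0 := by
    rw [hinv]
    linear_combination (ζ ^ 3 + 2) * h5 + hs
  set T : MvPolynomial (Fin 2) k := C (ζ + ζ⁻¹) with hT
  have hrel : T ^ 2 + T - 1 = 0 := by
    rw [hT]
    rw [show (1 : MvPolynomial (Fin 2) k) = C 1 from (map_one C).symm,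
      ← map_pow, ← map_add, ← map_sub, hτ, map_zero]
  have hCτ : (C ((ζ + ζ⁻¹) ^ 2 - 4) : MvPolynomial (Fin 2) k) = T ^ 2 - 4 := by
    rw [hT, map_sub, map_pow, map_ofNat]
  rw [hCτ]
  refine ⟨(X 1) ^ 3 + T * X 0 * (X 1) ^ 2 - T * (X 0) ^ 2 * X 1
      + (T - 2) * X 1 - (X 0) ^ 3 + (2 - T) * X 0, ?_⟩
  linear_combination hrel *
    (-(-(X 0) ^ 2 * (X 1) ^ 3 + (X 1) ^ 3 + (X 0) ^ 3 * (X 1) ^ 2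
      + (T - 2) * X 0 * (X 1) ^ 2 + (2 - T) * (X 0) ^ 2 * X 1 - (X 0) ^ 3
      + (T - 3) * X 1 + (3 - T) * X 0))
end
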